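/- For the sequence (z_t) defined in the context, for every t ∈ [T+1]: (i) ⟨h_t, z_t⟩ = ⟨h_i, z_t⟩ for all i with t < i ≤ T+1; (ii) ⟨h_t, z_t⟩ > ⟨h_i, z_t⟩ for all i with 1 ≤ i < t; consequently f(z_t) = ⟨h_t, z_t⟩ and h_t is a subgradient of f at z_t. -/

import Mathlib

open Finset


lemma step_ineq (α : ℝ) (hα0 : 0 ≤ α) (hα1 : α < 1) (i : ℕ) :
    (1 - α) * ((i:ℝ)+1) ^ (-α) ≤ ((i:ℝ)+1) ^ (1-α) - (i:ℝ) ^ (1-α) := by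
  set s : ℝ := (i:ℝ) + 1 with hs
  have hsp : (0:ℝ) < s := by positivity
  have hip : (0:ℝ) ≤ (i:ℝ) := Nat.cast_nonneg i
  have amgm := Real.geom_mean_le_arith_mean2_weighted (by linarith : (0:ℝ) ≤ 1-α) hα0 hip hsp.le
      (by ring : (1-α) + α = 1)
  -- (i)^(1-α) * s^α ≤ (1-α)*i + α*s = s - (1-α)
  have h1 : (i:ℝ) ^ (1-α) * s ^ α ≤ s - (1-α) := by
    calc (i:ℝ) ^ (1-α) * s ^ α ≤ (1-α) * i + α * s := amgm
    _ = s - (1-α) := by rw [hs]; ring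
  have h2 : s ^ (1-α) * s ^ α = s := by
    rw [← Real.rpow_add hsp]; norm_num
  have h3 : s ^ (-α) * s ^ α = 1 := by
    rw [← Real.rpow_add hsp]; norm_num
  have hsa : (0:ℝ) < s ^ α := Real.rpow_pos_of_pos hsp α
  rw [← mul_le_mul_iff_of_pos_right hsa]
  calc (1-α) * s ^ (-α) * (s ^ α) = 1 - α := by rw [mul_assoc, h3]; ring
    _ ≤ s ^ (1-α) * s ^ α - (i:ℝ) ^ (1-α) * s ^ α := by linarith [h1, h2]
    _ = (s ^ (1-α) - (i:ℝ) ^ (1-α)) * s ^ α := by ring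

lemma sum_rpow_le (T : ℕ) (α : ℝ) (hα0 : 0 ≤ α) (hα2 : α ≤ 1/2) :
    ∑ s ∈ Finset.Icc 1 T, ((s:ℝ)) ^ (-α) ≤ 2 * (T:ℝ) ^ (1-α) := by
  have hα1 : α < 1 := by linarith
  have key : (1-α) * ∑ s ∈ Finset.Icc 1 T, ((s:ℝ)) ^ (-α) ≤ (T:ℝ) ^ (1-α) := by
    have hrw : ∑ s ∈ Finset.Icc 1 T, ((s:ℝ)) ^ (-α)
        = ∑ i ∈ range T, (((i:ℝ))+1) ^ (-α) := by
      rw [← Finset.Ico_add_one_right_eq_Icc, Finset.sum_Ico_eq_sum_range]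
      simp [add_comm]
    rw [hrw, Finset.mul_sum]
    calc ∑ i ∈ range T, (1-α) * (((i:ℝ))+1) ^ (-α)
        ≤ ∑ i ∈ range T, ((((i:ℝ))+1) ^ (1-α) - ((i:ℝ)) ^ (1-α)) :=
          Finset.sum_le_sum fun i _ => step_ineq α hα0 hα1 i
      _ = (T:ℝ) ^ (1-α) - ((0:ℕ):ℝ) ^ (1-α) := by
          have := Finset.sum_range_sub (fun n : ℕ => ((n:ℝ)) ^ (1-α)) T
          simpa [Nat.cast_add, Nat.cast_one] using this
      _ = (T:ℝ) ^ (1-α) := by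
          simp [Real.zero_rpow (by linarith : (1:ℝ)-α ≠ 0)]
  have hpos : (0:ℝ) ≤ (T:ℝ) ^ (1-α) := Real.rpow_nonneg (Nat.cast_nonneg T) _
  nlinarith [key]

lemma key_sum_lt (T k : ℕ) (α : ℝ) (hα0 : 0 ≤ α) (hα2 : α ≤ 1/2) (hk1 : 1 ≤ k) (hkT : k ≤ T) :
    ∑ s ∈ Finset.Icc (k+1) T, ((s:ℝ)) ^ (-α) < 4 * ((T:ℝ) - (k:ℝ) + 1) * (T:ℝ) ^ (-α) := by
  have hT1 : 1 ≤ T := le_trans hk1 hkT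
  have hTpos : (0:ℝ) < (T:ℝ) := by exact_mod_cast hT1
  have hTa : (0:ℝ) < (T:ℝ) ^ (-α) := Real.rpow_pos_of_pos hTpos _
  have hcast : ((k:ℝ)) ≤ (T:ℝ) := by exact_mod_cast hkT
  rcases le_or_gt (2*k) T with hcase | hcase
  · -- k ≤ T/2
    have h1 : ∑ s ∈ Finset.Icc (k+1) T, ((s:ℝ)) ^ (-α)
        ≤ ∑ s ∈ Finset.Icc 1 T, ((s:ℝ)) ^ (-α) := by
      apply Finset.sum_le_sum_of_subset_of_nonneg
      · apply Finset.Icc_subset_Icc_left; omega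
      · intro i _ _; positivity
    have h2 := sum_rpow_le T α hα0 hα2
    have h3 : (T:ℝ) ^ (1-α) = (T:ℝ) * (T:ℝ) ^ (-α) := by
      rw [show (1:ℝ)-α = 1 + -α by ring, Real.rpow_add hTpos, Real.rpow_one]
    have h4 : 2 * (T:ℝ) < 4 * ((T:ℝ) - (k:ℝ) + 1) := by
      have : (2*k : ℝ) ≤ (T:ℝ) := by exact_mod_cast hcase
      linarith
    calc ∑ s ∈ Finset.Icc (k+1) T, ((s:ℝ)) ^ (-α) ≤ 2 * (T:ℝ) ^ (1-α) := le_trans h1 h2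
      _ = 2 * (T:ℝ) * (T:ℝ) ^ (-α) := by rw [h3]; ring
      _ < 4 * ((T:ℝ) - (k:ℝ) + 1) * (T:ℝ) ^ (-α) := by
          apply mul_lt_mul_of_pos_right h4 hTa
  · -- T < 2k : each term ≤ 2 * T^{-α}
    have hterm : ∀ s ∈ Finset.Icc (k+1) T, ((s:ℝ)) ^ (-α) ≤ 2 * (T:ℝ) ^ (-α) := by
      intro s hsmem
      rw [Finset.mem_Icc] at hsmem
      have hs1 : (0:ℝ) < (s:ℝ) := by
        have : 1 ≤ s := by omega
        exact_mod_cast this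
      have hT2s : (T:ℝ) ≤ 2 * (s:ℝ) := by
        have : T ≤ 2*s := by omega
        exact_mod_cast this
      have h5 : (T:ℝ) ^ α ≤ (2 * (s:ℝ)) ^ α :=
        Real.rpow_le_rpow (le_of_lt hTpos) hT2s hα0
      have h6 : (2 * (s:ℝ)) ^ α = 2 ^ α * (s:ℝ) ^ α :=
        Real.mul_rpow (by norm_num) hs1.le
      have h7 : (2:ℝ) ^ α ≤ 2 := by
        calc (2:ℝ) ^ α ≤ (2:ℝ) ^ (1:ℝ) :=
          Real.rpow_le_rpow_of_exponent_le (by norm_num) (by linarith)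
        _ = 2 := Real.rpow_one 2
      have hsa : (0:ℝ) < (s:ℝ) ^ α := Real.rpow_pos_of_pos hs1 α
      have h8 : (T:ℝ) ^ α ≤ 2 * (s:ℝ) ^ α := by
        calc (T:ℝ) ^ α ≤ 2 ^ α * (s:ℝ) ^ α := by rw [← h6]; exact h5
        _ ≤ 2 * (s:ℝ) ^ α := by nlinarith
      have hTA : (0:ℝ) < (T:ℝ) ^ α := Real.rpow_pos_of_pos hTpos α
      rw [Real.rpow_neg hs1.le, Real.rpow_neg hTpos.le]
      have hx : (0:ℝ) < ((s:ℝ) ^ α)⁻¹ := inv_pos.2 hsa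
      have hy : (0:ℝ) < ((T:ℝ) ^ α)⁻¹ := inv_pos.2 hTA
      have e1 : (s:ℝ) ^ α * ((s:ℝ) ^ α)⁻¹ = 1 := mul_inv_cancel₀ hsa.ne'
      have e2 : (T:ℝ) ^ α * ((T:ℝ) ^ α)⁻¹ = 1 := mul_inv_cancel₀ hTA.ne'
      have h9 := mul_le_mul_of_nonneg_right h8 (mul_pos hx hy).le
      nlinarith [h9, e1, e2, hx, hy]
    have h10 := Finset.sum_le_card_nsmul (Finset.Icc (k+1) T) (fun s => ((s:ℝ)) ^ (-α))
      (2 * (T:ℝ) ^ (-α)) hterm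
    rw [Nat.card_Icc] at h10
    have hcard : ((T + 1 - (k+1) : ℕ) : ℝ) = (T:ℝ) - (k:ℝ) := by
      have : T + 1 - (k+1) = T - k := by omega
      rw [this, Nat.cast_sub hkT]
    rw [nsmul_eq_mul, hcard] at h10
    calc ∑ s ∈ Finset.Icc (k+1) T, ((s:ℝ)) ^ (-α) ≤ ((T:ℝ) - (k:ℝ)) * (2 * (T:ℝ) ^ (-α)) := h10
      _ < 4 * ((T:ℝ) - (k:ℝ) + 1) * (T:ℝ) ^ (-α) := by nlinarith [hTa, hcast]



/- STATEMENT 6: for the SGDM trajectory z on the lower-bound function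
   f(x) = max_{i ∈ [T+1]} ⟨h_i, x⟩, for every t ∈ [T+1]:
   (i) ⟨h_t, z_t⟩ = ⟨h_i, z_t⟩ for all t < i ≤ T+1;
   (ii) ⟨h_t, z_t⟩ > ⟨h_i, z_t⟩ for all 1 ≤ i < t;
   consequently f(z_t) = ⟨h_t, z_t⟩ and h_t is a subgradient of f at z_t. -/
theorem stmt_6
    (T : ℕ) (hT : 1 ≤ T) (L β c α : ℝ)
    (hL : 0 < L) (hβ0 : 0 ≤ β) (hβ1 : β < 1) (hc : 0 < c) (hα0 : 0 ≤ α) (hα2 : α ≤ 1 / 2)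
    (η : ℕ → ℝ) (hη : ∀ t : ℕ, η t = c * (t : ℝ) ^ (-α))
    (a b : ℕ → ℝ)
    (hb : ∀ j : ℕ, b j = L * (j : ℝ) ^ α / (2 * (T : ℝ) ^ α))
    (ha : ∀ j : ℕ, a j = L * (1 - β) / (8 * ((T : ℝ) - (j : ℝ) + 1)))
    (h : ℕ → Fin T → ℝ)
    (hh : ∀ (i : ℕ) (j : Fin T), h i j =
      if (j : ℕ) + 1 < i then a ((j : ℕ) + 1)
      else if (j : ℕ) + 1 = i then -(b ((j : ℕ) + 1)) else 0)
    (f : (Fin T → ℝ) → ℝ)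
    (hf : ∀ x, f x = (Finset.Icc 1 (T + 1)).sup'
      (Finset.nonempty_Icc.2 (by omega)) (fun i => ∑ j, h i j * x j))
    (z : ℕ → Fin T → ℝ) (hz1 : z 1 = 0)
    (hzrec : ∀ t : ℕ, 1 ≤ t →
      z (t + 1) = z t - ((1 - β) * η t) • ∑ i ∈ Finset.Icc 1 t, (β ^ (t - i)) • h i) :
    ∀ t : ℕ, 1 ≤ t → t ≤ T + 1 →
      (∀ i : ℕ, t < i → i ≤ T + 1 → ∑ j, h t j * z t j = ∑ j, h i j * z t j) ∧
      (∀ i : ℕ, 1 ≤ i → i < t → ∑ j, h i j * z t j < ∑ j, h t j * z t j) ∧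
      f (z t) = ∑ j, h t j * z t j ∧
      (∀ y : Fin T → ℝ, f (z t) + ∑ j, h t j * (y j - z t j) ≤ f y) := by
  
  have hcoord : ∀ t : ℕ, 1 ≤ t → ∀ j : Fin T,
      z (t+1) j = z t j - (1-β) * η t * ∑ i ∈ Finset.Icc 1 t, β ^ (t - i) * h i j := by
    intro t ht j
    have := congrFun (hzrec t ht) j
    simpa [Finset.sum_apply, mul_assoc] using this
  have hzero : ∀ t : ℕ, 1 ≤ t → ∀ j : Fin T, t ≤ (j:ℕ) + 1 → z t j = 0 := by
    intro t ht
    induction t, ht using Nat.le_induction with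
    | base => intro j _; simp [hz1]
    | succ t ht IH =>
      intro j hj
      rw [hcoord t ht j, IH j (by omega)]
      have hz0 : ∀ i ∈ Finset.Icc 1 t, β ^ (t - i) * h i j = 0 := by
        intro i hi
        rw [Finset.mem_Icc] at hi
        rw [hh i j]
        have c1 : ¬((j:ℕ) + 1 < i) := by omega
        have c2 : ¬((j:ℕ) + 1 = i) := by omega
        simp [c1, c2]
      rw [Finset.sum_eq_zero hz0]; ring
  have hpos : ∀ (j : Fin T) (t : ℕ), (j:ℕ)+1 < t → t ≤ T+1 → 0 < z t j := by
    have hηpos : ∀ t : ℕ, 1 ≤ t → 0 < η t := by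
      intro t ht
      rw [hη]
      have : (0:ℝ) < (t:ℝ) := by exact_mod_cast ht
      positivity
    have hTpos : (0:ℝ) < (T:ℝ) := by exact_mod_cast hT
    intro j
    set k : ℕ := (j:ℕ) + 1 with hkdef
    have hk1 : 1 ≤ k := by omega
    have hkT : k ≤ T := by have := j.isLt; omega
    have hbpos : 0 < b k := by
      rw [hb]
      have : (0:ℝ) < (k:ℝ) := by exact_mod_cast hk1
      positivity
    have hTk : (0:ℝ) < (T:ℝ) - (k:ℝ) + 1 := by
      have : (k:ℝ) ≤ (T:ℝ) := by exact_mod_cast hkT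
      linarith
    have hapos : 0 < a k := by
      rw [ha]
      exact div_pos (mul_pos hL (by linarith)) (by linarith)
    -- sum formula
    have hS : ∀ t : ℕ, k ≤ t → ∑ i ∈ Finset.Icc 1 t, β ^ (t - i) * h i j
        = -(β ^ (t - k) * b k) + a k * ∑ i ∈ Finset.Icc (k+1) t, β ^ (t - i) := by
      intro t hkt
      have split : ∑ i ∈ Finset.Icc 1 t, β ^ (t - i) * h i j
          = (∑ i ∈ Finset.Icc 1 k, β ^ (t - i) * h i j)
            + ∑ i ∈ Finset.Icc (k+1) t, β ^ (t - i) * h i j := by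
        rw [show Finset.Icc 1 t = Finset.Ioc 0 t from (Finset.Icc_add_one_left_eq_Ioc 0 t),
            show Finset.Icc 1 k = Finset.Ioc 0 k from (Finset.Icc_add_one_left_eq_Ioc 0 k),
            show Finset.Icc (k+1) t = Finset.Ioc k t from (Finset.Icc_add_one_left_eq_Ioc k t)]
        exact (Finset.sum_Ioc_consecutive _ (Nat.zero_le k) hkt).symm
      have h1 : ∑ i ∈ Finset.Icc 1 k, β ^ (t - i) * h i j = -(β ^ (t - k) * b k) := by
        rw [Finset.sum_eq_single_of_mem k (Finset.mem_Icc.2 ⟨hk1, le_refl k⟩)]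
        · rw [hh k j]; simp [hkdef]
        · intro i hi hne
          rw [Finset.mem_Icc] at hi
          rw [hh i j]
          have c1 : ¬((j:ℕ) + 1 < i) := by omega
          have c2 : ¬((j:ℕ) + 1 = i) := by omega
          simp [c1, c2]
      have h2 : ∑ i ∈ Finset.Icc (k+1) t, β ^ (t - i) * h i j
          = a k * ∑ i ∈ Finset.Icc (k+1) t, β ^ (t - i) := by
        rw [Finset.mul_sum]
        apply Finset.sum_congr rfl
        intro i hi
        rw [Finset.mem_Icc] at hi
        rw [hh i j]
        have c1 : (j:ℕ) + 1 < i := by omega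
        rw [if_pos c1, mul_comm]
      rw [split, h1, h2]
    -- geometric sum bounds
    have hG : ∀ t : ℕ, k ≤ t → 0 ≤ (∑ i ∈ Finset.Icc (k+1) t, β ^ (t - i))
        ∧ (1-β) * (∑ i ∈ Finset.Icc (k+1) t, β ^ (t - i)) ≤ 1 := by
      intro t hkt
      induction t, hkt using Nat.le_induction with
      | base => rw [Finset.Icc_eq_empty (by omega)]; simp
      | succ t ht IH =>
        have hrw : ∑ i ∈ Finset.Icc (k+1) (t+1), β ^ (t+1 - i)
            = (∑ i ∈ Finset.Icc (k+1) t, β ^ (t - i)) * β + 1 := by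
          rw [Finset.sum_Icc_succ_top (by omega : k+1 ≤ t+1)]
          rw [Nat.sub_self, pow_zero, Finset.sum_mul]
          congr 1
          apply Finset.sum_congr rfl
          intro i hi
          rw [Finset.mem_Icc] at hi
          rw [show t + 1 - i = (t - i) + 1 by omega, pow_succ]
        rw [hrw]
        constructor
        · nlinarith [IH.1]
        · nlinarith [IH.1, IH.2]
    -- invariant
    have hQ : ∀ t' : ℕ, k ≤ t' →
        (1-β) * η k * b k - a k * ∑ s ∈ Finset.Icc (k+1) t', η s ≤ z (t'+1) j := by
      intro t' hkt'
      induction t', hkt' using Nat.le_induction with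
      | base =>
        rw [hcoord k hk1 j, hzero k hk1 j (le_refl k), hS k (le_refl k)]
        rw [Finset.Icc_eq_empty (by omega : ¬ k+1 ≤ k)]
        simp only [Finset.sum_empty, Nat.sub_self, pow_zero, mul_zero, one_mul]
        apply le_of_eq
        ring
      | succ t ht IH =>
        have ht1 : 1 ≤ t + 1 := by omega
        rw [hcoord (t+1) ht1 j, hS (t+1) (by omega)]
        rw [Finset.sum_Icc_succ_top (by omega : k+1 ≤ t+1) η]
        have hηt : 0 < η (t+1) := hηpos (t+1) ht1
        have hβk : 0 ≤ β ^ (t+1-k) := pow_nonneg hβ0 _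
        obtain ⟨hG1, hG2⟩ := hG (t+1) (by omega)
        have hstep : - ((1-β) * η (t+1) *
            (-(β ^ (t+1 - k) * b k) + a k * ∑ i ∈ Finset.Icc (k+1) (t+1), β ^ (t+1 - i)))
            ≥ - a k * η (t+1) := by
          have e1 : (1-β) * η (t+1) * (a k * ∑ i ∈ Finset.Icc (k+1) (t+1), β ^ (t+1 - i))
              = (a k * η (t+1)) * ((1-β) * ∑ i ∈ Finset.Icc (k+1) (t+1), β ^ (t+1 - i)) := by
            ring
          nlinarith [mul_pos hapos hηt, mul_nonneg (mul_nonneg (by linarith : (0:ℝ) ≤ 1-β) hηt.le) (mul_nonneg hβk hbpos.le)]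
        linarith [IH, hstep]
    -- key strict inequality
    have hkey : a k * ∑ s ∈ Finset.Icc (k+1) T, η s < (1-β) * η k * b k := by
      have hkpos : (0:ℝ) < (k:ℝ) := by exact_mod_cast hk1
      have hkk : (k:ℝ) ^ (-α) * (k:ℝ) ^ α = 1 := by
        rw [← Real.rpow_add hkpos, neg_add_cancel, Real.rpow_zero]
      have e1 : η k * b k = c * L / (2 * (T:ℝ) ^ α) := by
        rw [hη, hb]
        rw [show c * (k:ℝ) ^ (-α) * (L * (k:ℝ) ^ α / (2 * (T:ℝ) ^ α))
            = c * L * ((k:ℝ) ^ (-α) * (k:ℝ) ^ α) / (2 * (T:ℝ) ^ α) by ring, hkk, mul_one]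
      have e2 : ∑ s ∈ Finset.Icc (k+1) T, η s = c * ∑ s ∈ Finset.Icc (k+1) T, ((s:ℝ)) ^ (-α) := by
        rw [Finset.mul_sum]
        exact Finset.sum_congr rfl fun s _ => hη s
      have h3 := key_sum_lt T k α hα0 hα2 hk1 hkT
      have hTα : (0:ℝ) < (T:ℝ) ^ α := Real.rpow_pos_of_pos hTpos α
      have hTnα : (T:ℝ) ^ (-α) = ((T:ℝ) ^ α)⁻¹ := Real.rpow_neg hTpos.le α |>.trans rfl
      have h4 : a k * (c * ∑ s ∈ Finset.Icc (k+1) T, ((s:ℝ)) ^ (-α))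
          < a k * (c * (4 * ((T:ℝ) - (k:ℝ) + 1) * (T:ℝ) ^ (-α))) := by
        apply mul_lt_mul_of_pos_left _ hapos
        exact mul_lt_mul_of_pos_left h3 hc
      have e5 : a k * (c * (4 * ((T:ℝ) - (k:ℝ) + 1) * (T:ℝ) ^ (-α)))
          = (1-β) * (c * L / (2 * (T:ℝ) ^ α)) := by
        rw [ha, hTnα]
        have hk' : ((k:ℕ):ℝ) = (j:ℕ) + 1 := by rw [hkdef]; push_cast; ring
        field_simp
        ring
      calc a k * ∑ s ∈ Finset.Icc (k+1) T, η s
          = a k * (c * ∑ s ∈ Finset.Icc (k+1) T, ((s:ℝ)) ^ (-α)) := by rw [e2]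
        _ < a k * (c * (4 * ((T:ℝ) - (k:ℝ) + 1) * (T:ℝ) ^ (-α))) := h4
        _ = (1-β) * (c * L / (2 * (T:ℝ) ^ α)) := e5
        _ = (1-β) * η k * b k := by rw [mul_assoc, ← e1]
    -- conclusion
    intro t hkt htT
    obtain ⟨t', rfl⟩ : ∃ t', t = t' + 1 := ⟨t - 1, by omega⟩
    have h5 := hQ t' (by omega)
    have h6 : ∑ s ∈ Finset.Icc (k+1) t', η s ≤ ∑ s ∈ Finset.Icc (k+1) T, η s := by
      apply Finset.sum_le_sum_of_subset_of_nonneg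
      · exact Finset.Icc_subset_Icc_right (by omega)
      · intro s hs _
        rw [Finset.mem_Icc] at hs
        exact (hηpos s (by omega)).le
    nlinarith [h5, h6, hkey, hapos]
  have hbpos : ∀ k : ℕ, 1 ≤ k → 0 < b k := by
    intro k hk
    rw [hb]
    have h1 : (0:ℝ) < (k:ℝ) := by exact_mod_cast hk
    have h2 : (0:ℝ) < (T:ℝ) := by exact_mod_cast hT
    positivity
  have hapos : ∀ k : ℕ, k ≤ T → 0 < a k := by
    intro k hk
    rw [ha]
    have : (k:ℝ) ≤ (T:ℝ) := by exact_mod_cast hk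
    exact div_pos (mul_pos hL (by linarith)) (by linarith)
  intro t ht1 ht2
  have part1 : ∀ i : ℕ, t < i → i ≤ T + 1 → ∑ j, h t j * z t j = ∑ j, h i j * z t j := by
    intro i hti hiT
    apply Finset.sum_congr rfl
    intro j _
    rcases lt_or_ge ((j:ℕ)+1) t with hj | hj
    · rw [hh t j, hh i j, if_pos hj, if_pos (by omega : (j:ℕ)+1 < i)]
    · rw [hzero t ht1 j hj]; ring
  have part2 : ∀ i : ℕ, 1 ≤ i → i < t → ∑ j, h i j * z t j < ∑ j, h t j * z t j := by
    intro i hi1 hit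
    apply Finset.sum_lt_sum
    · intro j _
      rcases lt_trichotomy ((j:ℕ)+1) i with hc1 | hc1 | hc1
      · rw [hh i j, hh t j, if_pos hc1, if_pos (by omega : (j:ℕ)+1 < t)]
      · -- k = i : strict direction still ≤
        have hzj : 0 < z t j := hpos j t (by omega) ht2
        rw [hh i j, hh t j, if_neg (by omega : ¬ (j:ℕ)+1 < i), if_pos hc1,
           if_pos (by omega : (j:ℕ)+1 < t)]
        have hlt : -(b ((j:ℕ)+1)) < a ((j:ℕ)+1) := by
          have := hbpos ((j:ℕ)+1) (by omega)
          have := hapos ((j:ℕ)+1) (by have := j.isLt; omega)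
          linarith
        exact (mul_lt_mul_of_pos_right hlt hzj).le
      · rw [hh i j, if_neg (by omega : ¬ (j:ℕ)+1 < i), if_neg (by omega : ¬ (j:ℕ)+1 = i)]
        rcases lt_or_ge ((j:ℕ)+1) t with hj | hj
        · have hzj : 0 < z t j := hpos j t hj ht2
          have hat := hapos ((j:ℕ)+1) (by have := j.isLt; omega)
          rw [hh t j, if_pos hj]
          nlinarith
        · rw [hzero t ht1 j hj]; ring_nf; exact le_refl _
    · refine ⟨⟨i-1, by omega⟩, Finset.mem_univ _, ?_⟩
      have hji : ((⟨i-1, by omega⟩ : Fin T) : ℕ) + 1 = i := by simp; omega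
      have hzj : 0 < z t ⟨i-1, by omega⟩ := hpos _ t (by omega) ht2
      rw [hh i _, hh t _, hji, if_neg (by omega : ¬ i < i), if_pos rfl,
          if_pos (by omega : i < t)]
      have hlt : -(b i) < a i := by
        have := hbpos i hi1
        have := hapos i (by omega)
        linarith
      exact mul_lt_mul_of_pos_right hlt hzj
  have part3 : f (z t) = ∑ j, h t j * z t j := by
    rw [hf]
    apply le_antisymm
    · apply Finset.sup'_le
      intro i hi
      rw [Finset.mem_Icc] at hi
      rcases lt_trichotomy i t with hc1 | hc1 | hc1
      · exact (part2 i hi.1 hc1).le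
      · rw [hc1]
      · exact le_of_eq (part1 i hc1 hi.2).symm
    · exact Finset.le_sup' (fun i => ∑ j, h i j * z t j) (Finset.mem_Icc.2 ⟨ht1, ht2⟩)
  refine ⟨part1, part2, part3, ?_⟩
  intro y
  rw [part3, hf y]
  have e : (∑ j, h t j * z t j) + ∑ j, h t j * (y j - z t j) = ∑ j, h t j * y j := by
    rw [← Finset.sum_add_distrib]
    apply Finset.sum_congr rfl
    intro j _
    ring
  rw [e]
  exact Finset.le_sup' (fun i => ∑ j, h i j * y j) (Finset.mem_Icc.2 ⟨ht1, ht2⟩)
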